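/- Let (𝔭₀, 𝔭∞) be a complementary pair of height-one parabolic subalgebras of a finite-dimensional real semisimple Lie algebra 𝔤 and U an open subset of a finite-dimensional real normed space. Let F : U → 𝔭∞^⊥ and F^c : U → 𝔭₀^⊥ be smooth maps with ⁅(DF)_x(u), (DF^c)_x(v)⁆ = ⁅(DF)_x(v), (DF^c)_x(u)⁆ for all x, u, v (a Christoffel pair in stereoprojection). Put η_x(u) := exp(ad F(x))((DF^c)_x(u)), η^c_x(u) := exp(ad F^c(x))((DF)_x(u)), and, for t ∈ ℝ∖{0}, Γ^c(t)(x) := exp(ad F^c(x)) ∘ Γ_{𝔭₀}^{𝔭∞}(t) ∘ exp(−ad F(x)). Then Γ^c(t) gauges d + tη to d + tη^c: for every smooth ψ : U → 𝔤 and all x, u, Γ^c(t)(x)((Dψ)_x(u) + t⁅η_x(u), ψ(x)⁆) = (D(Γ^c(t)ψ))_x(u) + t⁅η^c_x(u), Γ^c(t)(x)(ψ(x))⁆. -/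

import Mathlib

open Module

/-- A Lie algebra structure on a real normed space, recorded as a bilinear bracket.
(Using a bracket carried as data avoids typeclass diamonds between the normed and
the Lie-algebraic structure.) -/
structure LieStructure (L : Type*) [NormedAddCommGroup L] [NormedSpace ℝ L] where
  bracket : L →ₗ[ℝ] L →ₗ[ℝ] L
  alternating : ∀ x : L, bracket x x = 0
  jacobi : ∀ x y z : L, bracket x (bracket y z) =
    bracket (bracket x y) z + bracket y (bracket x z)

namespace LieStructure

variable {L : Type*} [NormedAddCommGroup L] [NormedSpace ℝ L] (B : LieStructure L)

/-- The adjoint action `ad x = ⁅x, ·⁆`. -/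
def ad (x : L) : Module.End ℝ L := B.bracket x

/-- The Killing form `κ(x, y) = tr (ad x ∘ ad y)`. -/
noncomputable def killing (x y : L) : ℝ := LinearMap.trace ℝ L (B.ad x * B.ad y)

/-- Semisimplicity, via Cartan's criterion: the Killing form is nondegenerate. -/
def IsSemisimple : Prop := ∀ x : L, (∀ y : L, B.killing x y = 0) → x = 0

/-- A Lie subalgebra: a submodule closed under the bracket. -/
def IsSubalgebra (p : Submodule ℝ L) : Prop :=
  ∀ x ∈ p, ∀ y ∈ p, B.bracket x y ∈ p

/-- The Killing polar `𝔭^⊥`. -/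
noncomputable def polar (p : Submodule ℝ L) : Submodule ℝ L where
  carrier := {x | ∀ y ∈ p, B.killing x y = 0}
  add_mem' := fun {a b} ha hb y hy => by
    have : B.killing (a + b) y = B.killing a y + B.killing b y := by
      simp [killing, ad, map_add, add_mul]
    rw [this, ha y hy, hb y hy, add_zero]
  zero_mem' := fun y hy => by simp [killing, ad, map_zero, zero_mul]
  smul_mem' := fun c a ha y hy => by
    have : B.killing (c • a) y = c * B.killing a y := by
      simp [killing, ad, map_smul, smul_mul_assoc]
    rw [this, ha y hy, mul_zero]

/-- A height-one parabolic subalgebra: a subalgebra whose Killing polar is an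
abelian (hence nilpotent) subalgebra. -/
def IsH1Parabolic (p : Submodule ℝ L) : Prop :=
  B.IsSubalgebra p ∧ ∀ x ∈ B.polar p, ∀ y ∈ B.polar p, B.bracket x y = 0

/-- Complementary pair of height-one parabolic subalgebras:
`𝔤 = 𝔭 ⊕ 𝔮^⊥` and `𝔤 = 𝔮 ⊕ 𝔭^⊥`. -/
noncomputable def ComplPair (p q : Submodule ℝ L) : Prop :=
  IsCompl p (B.polar q) ∧ IsCompl q (B.polar p)

/-- `exp (ad z)`, the finite exponential series of the adjoint action (exhaustive
whenever `ad z` is nilpotent, since then `(ad z)^(dim 𝔤 + 1) = 0`). -/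
noncomputable def expAd [FiniteDimensional ℝ L] (z : L) : Module.End ℝ L :=
  ∑ k ∈ Finset.range (Module.finrank ℝ L + 1), (k.factorial : ℝ)⁻¹ • (B.ad z) ^ k

end LieStructure

namespace LieStructure

variable {L : Type*} [NormedAddCommGroup L] [NormedSpace ℝ L] (B : LieStructure L)

/-- `g = Γ_𝔭^𝔮(s)`: the linear map acting as multiplication by `s` on `𝔮^⊥`,
by `1` on `𝔭 ∩ 𝔮` and by `s⁻¹` on `𝔭^⊥`. -/
noncomputable def IsGammaMap (p q : Submodule ℝ L) (s : ℝ) (g : Module.End ℝ L) : Prop :=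
  (∀ x ∈ B.polar q, g x = s • x) ∧
  (∀ x, x ∈ p → x ∈ q → g x = x) ∧
  (∀ x ∈ B.polar p, g x = s⁻¹ • x)

end LieStructure

open LieStructure

/-!
Semisimplicity and the height-one conditions make `𝔤 = 𝔭∞^⊥ ⊕ (𝔭₀ ∩ 𝔭∞) ⊕ 𝔭₀^⊥` a grading
in degrees `1, 0, -1`, on which `Γ(t)` acts by `t ^ degree`. Hence `(ad z)³ = 0` for `z` in
either polar, `exp (ad z) = 1 + ad z + (ad z)² / 2` is a Lie automorphism, and
`Γ(t) ∘ ad w = t^{±1} • ad w ∘ Γ(t)` for `w ∈ 𝔭∞^⊥` resp. `𝔭₀^⊥`. Since each polar is abelian,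
`ad F` commutes with `ad (dF)`, so `d (exp (ad F^c)) = exp (ad F^c) ∘ ad (dF^c)` and
`d (exp (-ad F)) = -exp (-ad F) ∘ ad (dF)`; moving `ad` past the three factors of `Γ^c(t)` then
matches the two sides of the gauge identity term by term.
-/

open Filter Topology

theorem Module.End.pow_finrank_eq_zero_of_isNilpotent {K V : Type*} [Field K] [AddCommGroup V]
    [Module K V] [FiniteDimensional K V] {f : Module.End K V} (hf : IsNilpotent f) :
    f ^ Module.finrank K V = 0 := by
  simpa [hf.charpoly_eq_X_pow_finrank] using f.aeval_self_charpoly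

theorem fderiv_apply_mem_of_eventually_mem {E F : Type*} [NormedAddCommGroup E]
    [NormedSpace ℝ E] [NormedAddCommGroup F] [NormedSpace ℝ F] {S : Submodule ℝ F}
    [FiniteDimensional ℝ S] {f : E → F} {x : E} (hf : ∀ᶠ y in 𝓝 x, f y ∈ S) (u : E) :
    fderiv ℝ f x u ∈ S := by
  by_cases hd : DifferentiableAt ℝ f x
  · obtain ⟨P, hP⟩ := Submodule.ClosedComplemented.of_finiteDimensional S
    have hfP : (fun y => S.subtypeL (P (f y))) =ᶠ[𝓝 x] f :=
      hf.mono fun y hy => congrArg Subtype.val (hP ⟨f y, hy⟩)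
    have hπ : fderiv ℝ (fun y => S.subtypeL (P (f y))) x =
        (S.subtypeL.comp P).comp (fderiv ℝ f x) :=
      ((S.subtypeL.comp P).hasFDerivAt.comp x hd.hasFDerivAt).fderiv
    rw [← hfP.fderiv_eq, hπ]
    exact (P _).2
  · rw [fderiv_zero_of_not_differentiableAt hd]
    exact S.zero_mem

namespace LieStructure

section Polar

variable {L : Type*} [NormedAddCommGroup L] [NormedSpace ℝ L] (B : LieStructure L)

theorem bracket_comm (x y : L) : B.bracket x y = -B.bracket y x := by
  have h := B.alternating (x + y)
  simp only [map_add, LinearMap.add_apply, B.alternating, zero_add, add_zero] at h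
  exact eq_neg_of_add_eq_zero_right h

theorem ad_bracket (x y : L) : B.ad (B.bracket x y) = B.ad x * B.ad y - B.ad y * B.ad x := by
  ext v
  simp only [ad, LinearMap.sub_apply, Module.End.mul_apply, B.jacobi x y v]
  abel

theorem killing_comm (x y : L) : B.killing x y = B.killing y x :=
  LinearMap.trace_mul_comm ℝ (B.ad x) (B.ad y)

theorem killing_bracket (x y z : L) :
    B.killing (B.bracket x y) z = B.killing x (B.bracket y z) := by
  simp only [killing, ad_bracket, sub_mul, mul_sub, map_sub, mul_assoc]
  rw [LinearMap.trace_mul_comm ℝ (B.ad y), mul_assoc]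

theorem killing_add_right (x y z : L) :
    B.killing x (y + z) = B.killing x y + B.killing x z := by
  simp only [killing, ad, map_add, mul_add]

theorem le_polar_polar (p : Submodule ℝ L) : p ≤ B.polar (B.polar p) :=
  fun x hx y hy => by rw [killing_comm]; exact hy x hx

variable {B}

theorem bracket_mem_polar {p : Submodule ℝ L} (hp : B.IsSubalgebra p) {w x : L}
    (hw : w ∈ B.polar p) (hx : x ∈ p) : B.bracket w x ∈ B.polar p := fun y hy => by
  rw [killing_bracket]; exact hw _ (hp x hx y hy)

theorem bracket_mem_polar_polar {p : Submodule ℝ L}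
    (hp : ∀ x ∈ B.polar p, ∀ y ∈ B.polar p, B.bracket x y = 0) {z : L} (hz : z ∈ B.polar p)
    (w : L) : B.bracket z w ∈ B.polar (B.polar p) := fun a ha => by
  rw [killing_comm, ← killing_bracket, hp a ha z hz]
  simp [killing, ad]

theorem bracket_mem_polar_of_mem_polar_polar {q : Submodule ℝ L} (hq : B.IsSubalgebra q)
    {z c : L} (hz : z ∈ B.polar q) (hc : c ∈ B.polar (B.polar q)) :
    B.bracket z c ∈ B.polar q := fun x hx => by
  have hxz : B.bracket x z ∈ B.polar q := by
    rw [bracket_comm]; exact neg_mem (bracket_mem_polar hq hz hx)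
  rw [killing_comm, ← killing_bracket, killing_comm]
  exact hc _ hxz

theorem polar_polar_le (hss : B.IsSemisimple) {p q : Submodule ℝ L}
    (hpq : p ⊔ B.polar q = ⊤) (hqp : q ⊔ B.polar p = ⊤) : B.polar (B.polar p) ≤ p := by
  intro x hx
  obtain ⟨y, hy, a, ha, rfl⟩ := Submodule.mem_sup.mp (hpq ▸ Submodule.mem_top : x ∈ _)
  suffices a = 0 by rwa [this, add_zero]
  have ha' : a ∈ B.polar (B.polar p) := by
    simpa using sub_mem hx (B.le_polar_polar p hy)
  refine hss a fun v => ?_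
  obtain ⟨y', hy', b, hb, rfl⟩ := Submodule.mem_sup.mp (hqp ▸ Submodule.mem_top : v ∈ _)
  rw [killing_add_right, ha y' hy', ha' b hb, add_zero]

theorem IsGammaMap.symm {p q : Submodule ℝ L} {s : ℝ} {g : Module.End ℝ L}
    (hg : B.IsGammaMap p q s g) : B.IsGammaMap q p s⁻¹ g :=
  ⟨hg.2.2, fun x hq hp => hg.2.1 x hp hq, fun x hx => by rw [inv_inv]; exact hg.1 x hx⟩

structure IsComplementaryH1Pair (B : LieStructure L) (p q : Submodule ℝ L) : Prop where
  isSemisimple : B.IsSemisimple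
  left : B.IsH1Parabolic p
  right : B.IsH1Parabolic q
  complPair : B.ComplPair p q

theorem IsComplementaryH1Pair.symm {p q : Submodule ℝ L} (h : B.IsComplementaryH1Pair p q) :
    B.IsComplementaryH1Pair q p :=
  ⟨h.isSemisimple, h.right, h.left, h.complPair.2, h.complPair.1⟩

/-- `κ` vanishes on `𝔮^⊥`: for `z, w ∈ 𝔮^⊥`, `ad z ∘ ad w` maps `𝔤 = 𝔮 + 𝔭^⊥` into the
abelian `𝔮^⊥`, so it squares to zero and is traceless. -/
theorem polar_le_polar_polar {p q : Submodule ℝ L}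
    (hq : B.IsH1Parabolic q) (hsup : q ⊔ B.polar p = ⊤) :
    B.polar q ≤ B.polar (B.polar q) := by
  intro z hz w hw
  set M := B.ad z * B.ad w
  have hM : ∀ v, M v ∈ B.polar q := by
    intro v
    obtain ⟨y, hy, b, -, rfl⟩ := Submodule.mem_sup.mp (hsup ▸ Submodule.mem_top : v ∈ _)
    have hwy : B.bracket z (B.bracket w y) = 0 := hq.2 z hz _ (bracket_mem_polar hq.1 hw hy)
    simp only [M, Module.End.mul_apply, ad, map_add, hwy, zero_add]
    exact bracket_mem_polar_of_mem_polar_polar hq.1 hz (bracket_mem_polar_polar hq.2 hw b)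
  have hM2 : M ^ 2 = 0 := by
    ext v
    rw [pow_two, Module.End.mul_apply, LinearMap.zero_apply]
    change B.bracket z (B.bracket w (M v)) = 0
    rw [hq.2 w hw _ (hM v), map_zero]
  exact (LinearMap.isNilpotent_trace_of_isNilpotent ⟨2, hM2⟩).eq_zero

namespace IsComplementaryH1Pair

variable {p q : Submodule ℝ L} (h : B.IsComplementaryH1Pair p q)
include h

theorem polar_le_right : B.polar q ≤ q :=
  (polar_le_polar_polar h.right h.complPair.2.sup_eq_top).trans
    (polar_polar_le h.isSemisimple h.complPair.2.sup_eq_top h.complPair.1.sup_eq_top)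

theorem bracket_mem_inf {z w : L} (hz : z ∈ B.polar q) (hw : w ∈ B.polar p) :
    B.bracket z w ∈ p ⊓ q := by
  have hp := polar_polar_le h.isSemisimple h.complPair.1.sup_eq_top h.complPair.2.sup_eq_top
  have hq := polar_polar_le h.isSemisimple h.complPair.2.sup_eq_top h.complPair.1.sup_eq_top
  refine ⟨hp ?_, hq (bracket_mem_polar_polar h.right.2 hz w)⟩
  rw [bracket_comm]
  exact neg_mem (bracket_mem_polar_polar h.left.2 hw z)

theorem sup_inf_sup_eq_top : B.polar q ⊔ (p ⊓ q) ⊔ B.polar p = ⊤ := by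
  rw [sup_assoc, inf_sup_assoc_of_le q h.symm.polar_le_right, h.complPair.2.sup_eq_top,
    inf_top_eq, sup_comm, h.complPair.1.sup_eq_top]

theorem linearMap_ext {f f' : Module.End ℝ L} (hq : ∀ v ∈ B.polar q, f v = f' v)
    (hpq : ∀ v ∈ p ⊓ q, f v = f' v) (hp : ∀ v ∈ B.polar p, f v = f' v) : f = f' := by
  rw [← LinearMap.eqLocus_eq_top, eq_top_iff, ← h.sup_inf_sup_eq_top]
  exact sup_le (sup_le hq hpq) hp

theorem bracket_bracket_bracket_eq_zero {z₁ z₂ z₃ : L} (h₁ : z₁ ∈ B.polar q)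
    (h₂ : z₂ ∈ B.polar q) (h₃ : z₃ ∈ B.polar q) (v : L) :
    B.bracket z₁ (B.bracket z₂ (B.bracket z₃ v)) = 0 := by
  suffices B.ad z₁ * B.ad z₂ * B.ad z₃ = 0 from LinearMap.congr_fun this v
  refine h.linearMap_ext (fun v hv => ?_) (fun v hv => ?_) (fun v hv => ?_) <;>
    simp only [Module.End.mul_apply, ad, LinearMap.zero_apply]
  · rw [h.right.2 z₃ h₃ v hv, map_zero, map_zero]
  · rw [h.right.2 z₂ h₂ _ (bracket_mem_polar h.right.1 h₃ hv.2), map_zero]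
  · have h₃v : B.bracket z₃ v ∈ q := (h.bracket_mem_inf h₃ hv).2
    rw [h.right.2 z₁ h₁ _ (bracket_mem_polar h.right.1 h₂ h₃v)]

theorem ad_pow_three_eq_zero {z : L} (hz : z ∈ B.polar q) : B.ad z ^ 3 = 0 := by
  ext v
  simpa [pow_succ, ad] using h.bracket_bracket_bracket_eq_zero hz hz hz v

theorem gamma_bracket {g : Module.End ℝ L} {s : ℝ} (hg : B.IsGammaMap p q s g) (hs : s ≠ 0)
    {w : L} (hw : w ∈ B.polar q) (v : L) : g (B.bracket w v) = s • B.bracket w (g v) := by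
  suffices g * B.ad w = s • (B.ad w * g) from LinearMap.congr_fun this v
  refine h.linearMap_ext (fun v hv => ?_) (fun v hv => ?_) (fun v hv => ?_) <;>
    simp only [Module.End.mul_apply, LinearMap.smul_apply, ad]
  · rw [hg.1 v hv, map_smul, h.right.2 w hw v hv, map_zero, smul_zero, smul_zero]
  · rw [hg.1 _ (bracket_mem_polar h.right.1 hw hv.2), hg.2.1 v hv.1 hv.2]
  · have hwv := h.bracket_mem_inf hw hv
    rw [hg.2.1 _ hwv.1 hwv.2, hg.2.2 v hv, map_smul, smul_smul, mul_inv_cancel₀ hs, one_smul]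

end IsComplementaryH1Pair

variable (B) in
theorem ad_pow_three_apply (z v : L) :
    (B.ad z ^ 3) v = B.bracket z (B.bracket z (B.bracket z v)) := by
  simp [pow_succ, ad]

variable (B) in
theorem ad_neg_pow_three {z : L} (hz : B.ad z ^ 3 = 0) : B.ad (-z) ^ 3 = 0 := by
  rw [show B.ad (-z) = -B.ad z from map_neg B.bracket z, Odd.neg_pow (by decide), hz, neg_zero]

end Polar

variable {L : Type*} [NormedAddCommGroup L] [NormedSpace ℝ L] [FiniteDimensional ℝ L]

section ExpAd

variable (B : LieStructure L)

theorem expAd_apply_of_pow_three {z : L} (hz : B.ad z ^ 3 = 0) (v : L) :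
    B.expAd z v = v + B.bracket z v + (2 : ℝ)⁻¹ • B.bracket z (B.bracket z v) := by
  -- the defining sum of `expAd` stops at `finrank ℝ L`, which may be smaller than `3`
  set n := Module.finrank ℝ L
  let term : ℕ → Module.End ℝ L := fun k => (k.factorial : ℝ)⁻¹ • B.ad z ^ k
  have hterm : ∀ k ≥ min 3 n, term k = 0 := by
    intro k hk
    have hzk : B.ad z ^ k = 0 := by
      rcases min_le_iff.mp hk with h3 | hn
      · exact pow_eq_zero_of_le h3 hz
      · exact pow_eq_zero_of_le hn (Module.End.pow_finrank_eq_zero_of_isNilpotent ⟨3, hz⟩)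
    simp [term, hzk]
  have hsum : ∀ m ≥ min 3 n,
      ∑ k ∈ Finset.range m, term k = ∑ k ∈ Finset.range (min 3 n), term k := by
    intro m hm
    induction m, hm using Nat.le_induction with
    | base => rfl
    | succ m hm ih => rw [Finset.sum_range_succ, ih, hterm m hm, add_zero]
  have h3 : B.expAd z = ∑ k ∈ Finset.range 3, term k :=
    (hsum (n + 1) (by omega)).trans (hsum 3 (min_le_left _ _)).symm
  rw [h3]
  simp [term, Finset.sum_range_succ, ad, pow_succ]

theorem expAd_bracket {z : L} (hz : B.ad z ^ 3 = 0) (a b : L) :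
    B.expAd z (B.bracket a b) = B.bracket (B.expAd z a) (B.expAd z b) := by
  have h3 : ∀ v, B.bracket z (B.bracket z (B.bracket z v)) = 0 := fun v => by
    rw [← ad_pow_three_apply, hz, LinearMap.zero_apply]
  -- `ad z` is a derivation; `(ad z)³ = 0` and `(ad z)⁴ = 0` on `[a, b]` kill the cross terms
  -- of `[expAd z a, expAd z b]` of total degree `3` and `4`
  have j := B.jacobi z
  set a₁ := B.bracket z a
  set a₂ := B.bracket z a₁
  set b₁ := B.bracket z b
  set b₂ := B.bracket z b₁
  have e₁ : B.bracket z (B.bracket a b) = B.bracket a₁ b + B.bracket a b₁ := j a b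
  have e₂ : B.bracket z (B.bracket z (B.bracket a b)) =
      B.bracket a₂ b + 2 • B.bracket a₁ b₁ + B.bracket a b₂ := by
    rw [e₁, map_add, j a₁ b, j a b₁]; abel
  have e₃ : B.bracket a₂ b₁ + B.bracket a₁ b₂ = 0 := by
    have := h3 (B.bracket a b)
    rw [e₂, map_add, map_add, map_nsmul, j a₂ b, j a₁ b₁, j a b₂, h3 a, h3 b] at this
    simp only [map_zero, LinearMap.zero_apply, zero_add, add_zero] at this
    linear_combination (norm := module) (3 : ℝ)⁻¹ • this
  have e₄ : B.bracket a₂ b₂ = 0 := by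
    have := congrArg (B.bracket z) e₃
    rw [map_add, j a₂ b₁, j a₁ b₂, h3 a, h3 b] at this
    simp only [map_zero, LinearMap.zero_apply, zero_add, add_zero] at this
    linear_combination (norm := module) (2 : ℝ)⁻¹ • this
  simp only [B.expAd_apply_of_pow_three hz, map_add, map_smul, LinearMap.add_apply,
    LinearMap.smul_apply]
  rw [e₂, e₁]
  linear_combination (norm := module) -(2 : ℝ)⁻¹ • e₃ - (4 : ℝ)⁻¹ • e₄

theorem expAd_neg_apply_expAd {z : L} (hz : B.ad z ^ 3 = 0) (v : L) :
    B.expAd (-z) (B.expAd z v) = v := by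
  have h3 : ∀ v, B.bracket z (B.bracket z (B.bracket z v)) = 0 := fun v => by
    rw [← ad_pow_three_apply, hz, LinearMap.zero_apply]
  simp only [B.expAd_apply_of_pow_three (B.ad_neg_pow_three hz), B.expAd_apply_of_pow_three hz,
    map_add, map_smul, map_neg, LinearMap.neg_apply, neg_neg, h3, map_zero]
  module

theorem expAd_apply_of_bracket_eq_zero {z w : L} (h : B.bracket z w = 0) : B.expAd z w = w := by
  rw [expAd, LinearMap.sum_apply, Finset.sum_range_succ']
  simp [pow_succ, ad, h]

theorem expAd_apply_eventuallyEq {E : Type*} [TopologicalSpace E] {f φ : E → L} {x : E}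
    (hcube : ∀ᶠ y in 𝓝 x, B.ad (f y) ^ 3 = 0) :
    (fun y => B.expAd (f y) (φ y)) =ᶠ[𝓝 x] fun y =>
      φ y + B.bracket (f y) (φ y) + (2 : ℝ)⁻¹ • B.bracket (f y) (B.bracket (f y) (φ y)) :=
  hcube.mono fun y hy => B.expAd_apply_of_pow_three hy (φ y)

end ExpAd

section Derivative

variable (B : LieStructure L) {E : Type*} [NormedAddCommGroup E] [NormedSpace ℝ E]
  {f φ : E → L} {x : E}

theorem differentiableAt_expAd_apply (hcube : ∀ᶠ y in 𝓝 x, B.ad (f y) ^ 3 = 0)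
    (hf : DifferentiableAt ℝ f x) (hφ : DifferentiableAt ℝ φ x) :
    DifferentiableAt ℝ (fun y => B.expAd (f y) (φ y)) x := by
  refine DifferentiableAt.congr_of_eventuallyEq ?_ (B.expAd_apply_eventuallyEq hcube)
  let br := B.bracket.toContinuousBilinearMap
  change DifferentiableAt ℝ
    (fun y => φ y + br (f y) (φ y) + (2 : ℝ)⁻¹ • br (f y) (br (f y) (φ y))) x
  fun_prop

theorem fderiv_expAd_apply (hcube : ∀ᶠ y in 𝓝 x, B.ad (f y) ^ 3 = 0)
    (hf : DifferentiableAt ℝ f x) (hφ : DifferentiableAt ℝ φ x)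
    (hcomm : ∀ u, B.bracket (fderiv ℝ f x u) (f x) = 0)
    (hsq : ∀ u v, B.bracket (f x) (B.bracket (f x) (B.bracket (fderiv ℝ f x u) v)) = 0)
    (u : E) :
    fderiv ℝ (fun y => B.expAd (f y) (φ y)) x u =
      B.expAd (f x) (fderiv ℝ φ x u + B.bracket (fderiv ℝ f x u) (φ x)) := by
  let br := B.bracket.toContinuousBilinearMap
  have h₁ := br.hasFDerivAt_of_bilinear hf.hasFDerivAt hφ.hasFDerivAt
  have h₂ := br.hasFDerivAt_of_bilinear hf.hasFDerivAt h₁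
  have hT : HasFDerivAt (fun y => φ y + B.bracket (f y) (φ y) +
      (2 : ℝ)⁻¹ • B.bracket (f y) (B.bracket (f y) (φ y))) _ x :=
    (hφ.hasFDerivAt.add h₁).add (h₂.const_smul (2 : ℝ)⁻¹)
  rw [(B.expAd_apply_eventuallyEq hcube).fderiv_eq, hT.fderiv,
    B.expAd_apply_of_pow_three hcube.self_of_nhds]
  have hswap : ∀ v, B.bracket (fderiv ℝ f x u) (B.bracket (f x) v) =
      B.bracket (f x) (B.bracket (fderiv ℝ f x u) v) := fun v => by
    rw [B.jacobi, hcomm, map_zero, LinearMap.zero_apply, zero_add]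
  simp only [br, add_apply, smul_apply,
    ContinuousLinearMap.precompR_apply, ContinuousLinearMap.precompL_apply,
    ContinuousLinearMap.compL_apply, ContinuousLinearMap.comp_apply,
    LinearMap.toContinuousBilinearMap_apply, map_add, smul_add, hswap, hsq, add_zero]
  module

namespace IsComplementaryH1Pair

variable {B} {p q : Submodule ℝ L} (h : B.IsComplementaryH1Pair p q)
include h

theorem differentiableAt_expAd_apply (hfq : ∀ᶠ y in 𝓝 x, f y ∈ B.polar q)
    (hf : DifferentiableAt ℝ f x) (hφ : DifferentiableAt ℝ φ x) :
    DifferentiableAt ℝ (fun y => B.expAd (f y) (φ y)) x :=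
  B.differentiableAt_expAd_apply (hfq.mono fun _ => h.ad_pow_three_eq_zero) hf hφ

theorem fderiv_expAd_apply (hfq : ∀ᶠ y in 𝓝 x, f y ∈ B.polar q)
    (hf : DifferentiableAt ℝ f x) (hφ : DifferentiableAt ℝ φ x) (u : E) :
    fderiv ℝ (fun y => B.expAd (f y) (φ y)) x u =
      B.expAd (f x) (fderiv ℝ φ x u + B.bracket (fderiv ℝ f x u) (φ x)) := by
  have hf' : ∀ u, fderiv ℝ f x u ∈ B.polar q := fderiv_apply_mem_of_eventually_mem hfq
  exact B.fderiv_expAd_apply (hfq.mono fun _ => h.ad_pow_three_eq_zero) hf hφ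
    (fun u => h.right.2 _ (hf' u) _ hfq.self_of_nhds)
    (fun u => h.bracket_bracket_bracket_eq_zero hfq.self_of_nhds hfq.self_of_nhds (hf' u)) u

end IsComplementaryH1Pair

end Derivative

theorem IsComplementaryH1Pair.gauge_identity {B : LieStructure L} {p q : Submodule ℝ L}
    (h : B.IsComplementaryH1Pair p q) {g : Module.End ℝ L} {t : ℝ}
    (hg : B.IsGammaMap p q t g) (ht : t ≠ 0) {z a zc b : L} (hz : z ∈ B.polar q)
    (ha : a ∈ B.polar q) (hzc : zc ∈ B.polar p) (hb : b ∈ B.polar p) (v v' : L) :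
    (B.expAd zc * g * B.expAd (-z)) (v' + t • B.bracket (B.expAd z b) v) =
      B.expAd zc (g (B.expAd (-z) (v' + B.bracket (-a) v)) + B.bracket b (g (B.expAd (-z) v))) +
        t • B.bracket (B.expAd zc a) ((B.expAd zc * g * B.expAd (-z)) v) := by
  have hz3 := h.ad_pow_three_eq_zero hz
  have hz3' := B.ad_neg_pow_three hz3
  have hzc3 := h.symm.ad_pow_three_eq_zero hzc
  have hb' : B.expAd (-z) (B.bracket (B.expAd z b) v) = B.bracket b (B.expAd (-z) v) := by
    rw [B.expAd_bracket hz3', B.expAd_neg_apply_expAd hz3]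
  have ha' : B.expAd (-z) (B.bracket a v) = B.bracket a (B.expAd (-z) v) := by
    rw [B.expAd_bracket hz3', B.expAd_apply_of_bracket_eq_zero]
    rw [map_neg, LinearMap.neg_apply, h.right.2 z hz a ha, neg_zero]
  have hgb : t • g (B.bracket b (B.expAd (-z) v)) = B.bracket b (g (B.expAd (-z) v)) := by
    rw [h.symm.gamma_bracket hg.symm (inv_ne_zero ht) hb, smul_smul, mul_inv_cancel₀ ht,
      one_smul]
  have hga : g (B.bracket a (B.expAd (-z) v)) = t • B.bracket a (g (B.expAd (-z) v)) :=
    h.gamma_bracket hg ht ha _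
  simp only [Module.End.mul_apply, map_add, map_smul, map_neg, LinearMap.neg_apply, hb', ha',
    hga, ← B.expAd_bracket hzc3]
  rw [← map_smul (B.expAd zc), hgb]
  abel

end LieStructure

theorem christoffel_gauge_general
    {L : Type*} [NormedAddCommGroup L] [NormedSpace ℝ L] [FiniteDimensional ℝ L]
    (B : LieStructure L) (hss : B.IsSemisimple)
    {E : Type*} [NormedAddCommGroup E] [NormedSpace ℝ E]
    (U : Set E) (hU : IsOpen U)
    (p0 pinf : Submodule ℝ L)
    (h0 : B.IsH1Parabolic p0) (hinf : B.IsH1Parabolic pinf)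
    (hc : B.ComplPair p0 pinf)
    (F : E → L) (hF : ContDiffOn ℝ (⊤ : ℕ∞) F U)
    (hFval : ∀ x ∈ U, F x ∈ B.polar pinf)
    (Fc : E → L) (hFc : ContDiffOn ℝ (⊤ : ℕ∞) Fc U)
    (hFcval : ∀ x ∈ U, Fc x ∈ B.polar p0)
    (t : ℝ) (ht : t ≠ 0)
    (g : Module.End ℝ L) (hg : B.IsGammaMap p0 pinf t g) :
    ∀ ψ : E → L, ContDiffOn ℝ (⊤ : ℕ∞) ψ U →
      ∀ x ∈ U, ∀ u : E,
        (B.expAd (Fc x) * g * B.expAd (-(F x)))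
            (fderiv ℝ ψ x u + t • B.bracket (B.expAd (F x) (fderiv ℝ Fc x u)) (ψ x)) =
        fderiv ℝ (fun y => (B.expAd (Fc y) * g * B.expAd (-(F y))) (ψ y)) x u +
          t • B.bracket (B.expAd (Fc x) (fderiv ℝ F x u))
            ((B.expAd (Fc x) * g * B.expAd (-(F x))) (ψ x)) := by
  intro ψ hψ x hx u
  have h : B.IsComplementaryH1Pair p0 pinf := ⟨hss, h0, hinf, hc⟩
  have hUx : U ∈ 𝓝 x := hU.mem_nhds hx
  have hdiff : ∀ {f : E → L}, ContDiffOn ℝ (⊤ : ℕ∞) f U → DifferentiableAt ℝ f x :=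
    fun hf => (hf.differentiableOn (by simp)).differentiableAt hUx
  have hFx : ∀ᶠ y in 𝓝 x, F y ∈ B.polar pinf := eventually_of_mem hUx hFval
  have hFcx : ∀ᶠ y in 𝓝 x, Fc y ∈ B.polar p0 := eventually_of_mem hUx hFcval
  have hnegF : ∀ᶠ y in 𝓝 x, -F y ∈ B.polar pinf := hFx.mono fun _ => neg_mem
  let gL := LinearMap.toContinuousLinearMap g
  have hφ : HasFDerivAt (fun y => g (B.expAd (-F y) (ψ y))) (gL.comp (fderiv ℝ _ x)) x :=
    gL.hasFDerivAt.comp x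
      (h.differentiableAt_expAd_apply hnegF (hdiff hF).neg (hdiff hψ)).hasFDerivAt
  change _ = fderiv ℝ (fun y => B.expAd (Fc y) (g (B.expAd (-F y) (ψ y)))) x u + _
  rw [h.symm.fderiv_expAd_apply hFcx (hdiff hFc) hφ.differentiableAt, hφ.fderiv,
    ContinuousLinearMap.comp_apply, h.fderiv_expAd_apply hnegF (hdiff hF).neg (hdiff hψ),
    fderiv_fun_neg]
  exact h.gauge_identity hg ht hFx.self_of_nhds (fderiv_apply_mem_of_eventually_mem hFx u)
    hFcx.self_of_nhds (fderiv_apply_mem_of_eventually_mem hFcx u) _ _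

/-- **The Christoffel gauge.**  For a Christoffel pair `(F, F^c)` in
stereoprojection with respect to `(𝔭₀, 𝔭∞)`, and
`Γ^c(t)(x) := exp(ad F^c(x)) ∘ Γ_{𝔭₀}^{𝔭∞}(t) ∘ exp(−ad F(x))`, the family `Γ^c(t)`
gauges `d + tη` to `d + tη^c`, where `η = exp(ad F)·dF^c` and
`η^c = exp(ad F^c)·dF`. -/
theorem christoffel_gauge
    {L : Type*} [NormedAddCommGroup L] [NormedSpace ℝ L] [FiniteDimensional ℝ L]
    (B : LieStructure L) (hss : B.IsSemisimple)
    {E : Type*} [NormedAddCommGroup E] [NormedSpace ℝ E] [FiniteDimensional ℝ E]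
    (U : Set E) (hU : IsOpen U)
    (p0 pinf : Submodule ℝ L)
    (h0 : B.IsH1Parabolic p0) (hinf : B.IsH1Parabolic pinf)
    (hc : B.ComplPair p0 pinf)
    (F : E → L) (hF : ContDiffOn ℝ (⊤ : ℕ∞) F U)
    (hFval : ∀ x ∈ U, F x ∈ B.polar pinf)
    (Fc : E → L) (hFc : ContDiffOn ℝ (⊤ : ℕ∞) Fc U)
    (hFcval : ∀ x ∈ U, Fc x ∈ B.polar p0)
    (hsymm : ∀ x ∈ U, ∀ u v : E,
      B.bracket (fderiv ℝ F x u) (fderiv ℝ Fc x v) =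
      B.bracket (fderiv ℝ F x v) (fderiv ℝ Fc x u))
    (t : ℝ) (ht : t ≠ 0)
    (g : Module.End ℝ L) (hg : B.IsGammaMap p0 pinf t g) :
    ∀ ψ : E → L, ContDiffOn ℝ (⊤ : ℕ∞) ψ U →
      ∀ x ∈ U, ∀ u : E,
        (B.expAd (Fc x) * g * B.expAd (-(F x)))
            (fderiv ℝ ψ x u + t • B.bracket (B.expAd (F x) (fderiv ℝ Fc x u)) (ψ x)) =
        fderiv ℝ (fun y => (B.expAd (Fc y) * g * B.expAd (-(F y))) (ψ y)) x u +
          t • B.bracket (B.expAd (Fc x) (fderiv ℝ F x u))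
            ((B.expAd (Fc x) * g * B.expAd (-(F x))) (ψ x)) :=
  christoffel_gauge_general B hss U hU p0 pinf h0 hinf hc F hF hFval Fc hFc hFcval t ht g hg
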